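/- arXiv:1808.03678 — 3 statements merged into one kernel-verified Lean document; each statement's English description precedes it below -/
import Mathlib

section
/- Let R be a commutative Noetherian ring and M a finitely generated R-module. Then the set of primes p in Spec R such that the R_p-module M_p has finite projective dimension is an open subset of Spec R. -/
/-!
Write `U n` for the set of primes `p` with `pd M_p < n + 1`, so that the locus in question is
`⋃ n, U n`. A finitely presented module over a local ring is projective iff it is free, so `U 0`
is the free locus of `M`, which is open. For `n > 0`, pick a presentation
`0 → K → R^k → M → 0`: it stays exact after localizing, with `R^k_p` projective, so
`pd M_p < n + 2 ↔ pd K_p < n + 1`, i.e. `U n` for `M` is `U (n - 1)` for `K`. Since `R` is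
Noetherian, `K` is again finitely generated, and induction on `n` shows that every `U n` is open.
-/

open CategoryTheory

universe u

/-- A commutative ring `A` is a regular local ring if it is Noetherian, local, and its
maximal ideal can be generated by `d` elements, where `d` is the Krull dimension of `A`. -/
def IsRegularLocal (A : Type u) [CommRing A] : Prop :=
  IsNoetherianRing A ∧ ∃ h : IsLocalRing A,
    ∃ s : Finset A, Ideal.span (s : Set A) = @IsLocalRing.maximalIdeal A _ h ∧
      (s.card : WithBot (WithTop ℕ)) = ringKrullDim A

/-- The regular locus of `R`: the set of primes `p` such that the localization `R_p`
is a regular local ring. -/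
def regularLocus (R : Type u) [CommRing R] : Set (PrimeSpectrum R) :=
  { p | IsRegularLocal (Localization.AtPrime p.asIdeal) }

/-- A commutative ring is regular if all its localizations at primes are regular local rings. -/
def IsRegularRing' (A : Type u) [CommRing A] : Prop :=
  ∀ q : PrimeSpectrum A, IsRegularLocal (Localization.AtPrime q.asIdeal)

/-- `M` has finite projective dimension over `R` if it admits a finite-length
resolution by projective `R`-modules. -/
def HasFiniteProjDim (R : Type u) [CommRing R] (M : Type u) [AddCommGroup M]
    [Module R M] : Prop :=
  ∃ (n : ℕ) (P : ℕ → ModuleCat.{u} R) (d : ∀ i, P (i + 1) →ₗ[R] P i) (ε : P 0 →ₗ[R] M),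
    (∀ i, Module.Projective R (P i)) ∧
    Function.Surjective ε ∧
    LinearMap.range (d 0) = LinearMap.ker ε ∧
    (∀ i, LinearMap.range (d (i + 1)) = LinearMap.ker (d i)) ∧
    (∀ i, n < i → Subsingleton (P i))

/-- The locus of primes `p` where the localization `M_p` has finite projective
dimension over `R_p`. -/
def finProjDimLocus (R : Type u) [CommRing R] (M : Type u) [AddCommGroup M]
    [Module R M] : Set (PrimeSpectrum R) :=
  { p | HasFiniteProjDim (Localization.AtPrime p.asIdeal)
      (LocalizedModule p.asIdeal.primeCompl M) }

/-- `G` is a generator for the category of finitely generated `R`-modules: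
`G` is finitely generated, and any class of finitely generated modules containing `G`
which is closed under isomorphisms and direct summands and satisfies the two-out-of-three
property for short exact sequences contains all finitely generated modules. -/
def IsModGenerator (R : Type u) [CommRing R] (G : ModuleCat.{u} R) : Prop :=
  Module.Finite R G ∧
  ∀ S : Set (ModuleCat.{u} R),
    G ∈ S →
    (∀ M N : ModuleCat.{u} R, M ∈ S → Nonempty (M ≃ₗ[R] N) → N ∈ S) →
    (∀ M N : ModuleCat.{u} R, Module.Finite R M → Module.Finite R N → M ∈ S →
      (∃ (i : N →ₗ[R] M) (r : M →ₗ[R] N), r ∘ₗ i = LinearMap.id) → N ∈ S) →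
    (∀ X Y Z : ModuleCat.{u} R, Module.Finite R X → Module.Finite R Y → Module.Finite R Z →
      ∀ (f : X →ₗ[R] Y) (g : Y →ₗ[R] Z), Function.Injective f → Function.Surjective g →
        LinearMap.range f = LinearMap.ker g →
        ((X ∈ S ∧ Y ∈ S → Z ∈ S) ∧ (Y ∈ S ∧ Z ∈ S → X ∈ S) ∧ (X ∈ S ∧ Z ∈ S → Y ∈ S))) →
    ∀ M : ModuleCat.{u} R, Module.Finite R M → M ∈ S

section ProjectiveDimension

variable {A : Type u}

lemma hasProjectiveDimensionLT_add_two_iff_of_exact [Ring A]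
    {K P M : Type u} [AddCommGroup K] [Module A K] [AddCommGroup P] [Module A P]
    [Module.Projective A P] [AddCommGroup M] [Module A M] {f : K →ₗ[A] P} {g : P →ₗ[A] M}
    (hf : Function.Injective f) (hg : Function.Surjective g) (hfg : Function.Exact f g)
    (n : ℕ) :
    HasProjectiveDimensionLT (ModuleCat.of A M) (n + 2) ↔
      HasProjectiveDimensionLT (ModuleCat.of A K) (n + 1) :=
  (ModuleCat.shortComplex_shortExact
    (ModuleCat.shortComplexOfCompEqZero f g hfg.linearMap_comp_eq_zero) hfg hf hg
    ).hasProjectiveDimensionLT_X₃_iff n inferInstance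

variable [CommRing A]

lemma hasProjectiveDimensionLT_of_resolution {M : Type u} [AddCommGroup M] [Module A M]
    (n : ℕ) (P : ℕ → ModuleCat.{u} A) (d : ∀ i, P (i + 1) →ₗ[A] P i) (ε : P 0 →ₗ[A] M)
    (hP : ∀ i, Module.Projective A (P i)) (hε : Function.Surjective ε)
    (hε0 : LinearMap.range (d 0) = LinearMap.ker ε)
    (hd : ∀ i, LinearMap.range (d (i + 1)) = LinearMap.ker (d i))
    (hn : ∀ i, n ≤ i → Subsingleton (P i)) :
    HasProjectiveDimensionLT (ModuleCat.of A M) n := by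
  induction n generalizing M P with
  | zero =>
    have := hn 0 le_rfl
    have : Subsingleton M := hε.subsingleton
    exact (ModuleCat.of A M).isZero_of_subsingleton.hasProjectiveDimensionLT_zero
  | succ n ih =>
    let ε' : P 1 →ₗ[A] LinearMap.ker ε := (d 0).codRestrict _ fun x => hε0 ▸ ⟨x, rfl⟩
    have hε' : Function.Surjective ε' := by
      rintro ⟨k, hk⟩
      obtain ⟨x, rfl⟩ := hε0.ge hk
      exact ⟨x, rfl⟩
    have hK : HasProjectiveDimensionLT (ModuleCat.of A (LinearMap.ker ε)) n :=
      ih (fun i => P (i + 1)) (fun i => d (i + 1)) ε' (fun i => hP (i + 1)) hε'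
        (by rw [LinearMap.ker_codRestrict]; exact hd 0) (fun i => hd (i + 1))
        (fun i hi => hn (i + 1) (by omega))
    have : HasProjectiveDimensionLT (P 0) (n + 1) :=
      hasProjectiveDimensionLT_of_ge _ 1 _ (by omega)
    exact (LinearMap.shortExact_shortComplexKer hε).hasProjectiveDimensionLT_X₃ n hK this

lemma hasFiniteProjDim_of_projective {M : Type u} [AddCommGroup M] [Module A M]
    [Module.Projective A M] : HasFiniteProjDim A M := by
  refine ⟨0, fun | 0 => ModuleCat.of A M | _ + 1 => ModuleCat.of A PUnit, fun _ => 0,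
    LinearMap.id, ?_, Function.surjective_id, ?_, fun _ => Subsingleton.elim _ _, ?_⟩
  · rintro (_ | _) <;> infer_instance
  · rw [LinearMap.range_zero, LinearMap.ker_id]
  · rintro (_ | _) hi
    · omega
    · infer_instance

lemma HasFiniteProjDim.of_exact {K P M : Type u} [AddCommGroup K] [Module A K]
    [AddCommGroup P] [Module A P] [Module.Projective A P] [AddCommGroup M] [Module A M]
    {f : K →ₗ[A] P} {g : P →ₗ[A] M} (hf : Function.Injective f) (hg : Function.Surjective g)
    (hfg : Function.Exact f g) (hK : HasFiniteProjDim A K) : HasFiniteProjDim A M := by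
  obtain ⟨n, Q, d, η, hQ, hη, hη0, hd, hn⟩ := hK
  refine ⟨n + 1, fun | 0 => ModuleCat.of A P | i + 1 => Q i,
    fun | 0 => f ∘ₗ η | i + 1 => d i, g, ?_, hg, ?_, ?_, ?_⟩
  · rintro (_ | i)
    exacts [inferInstanceAs (Module.Projective A P), hQ i]
  · rw [LinearMap.range_comp, LinearMap.range_eq_top.mpr hη, Submodule.map_top,
      hfg.linearMap_ker_eq]
  · rintro (_ | i)
    · show LinearMap.range (d 0) = LinearMap.ker (f ∘ₗ η)
      rw [LinearMap.ker_comp, LinearMap.ker_eq_bot.mpr hf, Submodule.comap_bot, hη0]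
    · exact hd i
  · rintro (_ | i) hi
    · omega
    · exact hn i (by omega)

lemma hasFiniteProjDim_of_hasProjectiveDimensionLT {M : Type u} [AddCommGroup M] [Module A M]
    (n : ℕ) (h : HasProjectiveDimensionLT (ModuleCat.of A M) (n + 1)) :
    HasFiniteProjDim A M := by
  induction n generalizing M with
  | zero =>
    have : Module.Projective A M := (IsProjective.iff_projective M).mpr
      (projective_iff_hasProjectiveDimensionLT_one.mpr h)
    exact hasFiniteProjDim_of_projective
  | succ n ih =>
    obtain ⟨g, hg⟩ : ∃ g : (M →₀ A) →ₗ[A] M, Function.Surjective g :=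
      ⟨_, Finsupp.linearCombination_id_surjective A M⟩
    have hK : HasProjectiveDimensionLT (ModuleCat.of A (LinearMap.ker g)) (n + 1) :=
      (hasProjectiveDimensionLT_add_two_iff_of_exact (LinearMap.ker g).injective_subtype hg
        (LinearMap.exact_subtype_ker_map g) n).mp h
    exact (ih hK).of_exact (LinearMap.ker g).injective_subtype hg
      (LinearMap.exact_subtype_ker_map g)

lemma hasFiniteProjDim_iff {M : Type u} [AddCommGroup M] [Module A M] :
    HasFiniteProjDim A M ↔ ∃ n, HasProjectiveDimensionLT (ModuleCat.of A M) (n + 1) :=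
  ⟨fun ⟨n, P, d, ε, hP, hε, hε0, hd, hn⟩ =>
    ⟨n, hasProjectiveDimensionLT_of_resolution (n + 1) P d ε hP hε hε0 hd hn⟩,
   fun ⟨n, h⟩ => hasFiniteProjDim_of_hasProjectiveDimensionLT n h⟩

end ProjectiveDimension

def projDimLTLocus (R : Type u) [CommRing R] (M : Type u) [AddCommGroup M] [Module R M]
    (n : ℕ) : Set (PrimeSpectrum R) :=
  { p | HasProjectiveDimensionLT
      (ModuleCat.of (Localization.AtPrime p.asIdeal) (LocalizedModule p.asIdeal.primeCompl M)) n }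

section Locus

variable {R : Type u} [CommRing R] {M : Type u} [AddCommGroup M] [Module R M]

lemma projDimLTLocus_one_eq_freeLocus [Module.FinitePresentation R M] :
    projDimLTLocus R M 1 = Module.freeLocus R M := by
  ext p
  rw [projDimLTLocus, Set.mem_ofPred_eq, Module.mem_freeLocus,
    ← projective_iff_hasProjectiveDimensionLT_one, ← IsProjective.iff_projective]
  exact ⟨fun _ => Module.free_of_flat_of_isLocalRing, fun _ => inferInstance⟩

lemma projDimLTLocus_add_two_eq_of_exact {K F : Type u} [AddCommGroup K] [Module R K]
    [AddCommGroup F] [Module R F] [Module.Projective R F]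
    {f : K →ₗ[R] F} {g : F →ₗ[R] M} (hf : Function.Injective f) (hg : Function.Surjective g)
    (hfg : Function.Exact f g) (n : ℕ) :
    projDimLTLocus R M (n + 2) = projDimLTLocus R K (n + 1) := by
  ext p
  exact hasProjectiveDimensionLT_add_two_iff_of_exact (LocalizedModule.map_injective _ f hf)
    (LocalizedModule.map_surjective _ g hg) (LocalizedModule.map_exact _ f g hfg) n

theorem isOpen_projDimLTLocus_add_one [IsNoetherianRing R] [Module.Finite R M] (n : ℕ) :
    IsOpen (projDimLTLocus R M (n + 1)) := by
  induction n generalizing M with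
  | zero =>
    have := Module.finitePresentation_of_finite R M
    rw [zero_add, projDimLTLocus_one_eq_freeLocus]
    exact Module.isOpen_freeLocus
  | succ n ih =>
    obtain ⟨k, g, hg⟩ := Module.Finite.exists_fin' R M
    rw [projDimLTLocus_add_two_eq_of_exact (LinearMap.ker g).injective_subtype hg
      (LinearMap.exact_subtype_ker_map g)]
    exact ih

end Locus

/-- For a finitely generated module `M` over a commutative Noetherian ring `R`, the set of
primes `p` such that `M_p` has finite projective dimension over `R_p` is open in `Spec R`. -/
theorem finProjDimLocus_isOpen (R : Type u) [CommRing R] [IsNoetherianRing R]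
    (M : Type u) [AddCommGroup M] [Module R M] [Module.Finite R M] :
    IsOpen (finProjDimLocus R M) := by
  have hlocus : finProjDimLocus R M = ⋃ n, projDimLTLocus R M (n + 1) := by
    ext p
    rw [Set.mem_iUnion]
    exact hasFiniteProjDim_iff
  rw [hlocus]
  exact isOpen_iUnion fun n => isOpen_projDimLTLocus_add_one n
end

section
/- Let R be a commutative Noetherian ring. If for every minimal prime ideal p of R the category of finitely generated (R/p)-modules has a generator, then the category of finitely generated R-modules has a generator. -/
open CategoryTheory

universe u

/-!
A finite direct sum `G` of the generators `G_p` for the minimal primes `p`, viewed as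
`R`-modules, generates `mod R`. Restriction of scalars along the finite map `R → R ⧸ p` carries
thick classes to thick classes, so a thick class containing `G` (hence each summand `G_p`)
contains every finitely generated `R ⧸ p`-module, in particular `R ⧸ q` for every prime `q ⊇ p`.
Every prime contains a minimal prime, so the class contains all `R ⧸ q`, and since a finitely
generated module over a Noetherian ring has a filtration with such subquotients, it contains
every finitely generated `R`-module.
-/

namespace ModuleCat

variable {R : Type u} [CommRing R]

structure IsThickClass (S : Set (ModuleCat.{u} R)) : Prop where
  of_linearEquiv : ∀ M N : ModuleCat.{u} R, M ∈ S → Nonempty (M ≃ₗ[R] N) → N ∈ S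
  of_retract : ∀ M N : ModuleCat.{u} R, Module.Finite R M → Module.Finite R N → M ∈ S →
    (∃ (i : N →ₗ[R] M) (r : M →ₗ[R] N), r ∘ₗ i = LinearMap.id) → N ∈ S
  two_of_three : ∀ X Y Z : ModuleCat.{u} R, Module.Finite R X → Module.Finite R Y →
    Module.Finite R Z → ∀ (f : X →ₗ[R] Y) (g : Y →ₗ[R] Z), Function.Injective f →
      Function.Surjective g → LinearMap.range f = LinearMap.ker g →
      ((X ∈ S ∧ Y ∈ S → Z ∈ S) ∧ (Y ∈ S ∧ Z ∈ S → X ∈ S) ∧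
        (X ∈ S ∧ Z ∈ S → Y ∈ S))

theorem isModGenerator_iff {G : ModuleCat.{u} R} :
    IsModGenerator R G ↔ Module.Finite R G ∧
      ∀ S : Set (ModuleCat.{u} R), G ∈ S → IsThickClass S →
        ∀ M : ModuleCat.{u} R, Module.Finite R M → M ∈ S :=
  and_congr_right' <| forall_congr' fun _ ↦ forall_congr' fun _ ↦
    ⟨fun h hS ↦ h hS.1 hS.2 hS.3, fun h h₁ h₂ h₃ ↦ h ⟨h₁, h₂, h₃⟩⟩

namespace IsThickClass

variable {S : Set (ModuleCat.{u} R)}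

theorem mem_of_subsingleton (hS : IsThickClass S) {M : ModuleCat.{u} R} [Module.Finite R M]
    (hM : M ∈ S) (N : ModuleCat.{u} R) [Subsingleton N] : N ∈ S :=
  (hS.two_of_three M M N inferInstance inferInstance inferInstance LinearMap.id 0
    Function.injective_id (Function.surjective_to_subsingleton _)
    (by rw [LinearMap.range_id, LinearMap.ker_zero])).1 ⟨hM, hM⟩

theorem mem_of_isNoetherianRing [IsNoetherianRing R] (hS : IsThickClass S)
    (hzero : ∀ N : ModuleCat.{u} R, Subsingleton N → N ∈ S)
    (hprime : ∀ q : Ideal R, q.IsPrime → of R (R ⧸ q) ∈ S)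
    (M : Type u) [AddCommGroup M] [Module R M] (hM : Module.Finite R M) : of R M ∈ S := by
  induction hM using IsNoetherianRing.induction_on_isQuotientEquivQuotientPrime R with
  | subsingleton N => exact hzero (of R N) ‹_›
  | quotient N q e => exact hS.of_linearEquiv _ (of R N) (hprime q.1 q.2) ⟨e.symm⟩
  | exact N₁ N₂ N₃ f g hf hg hfg h₁ h₃ =>
    exact (hS.two_of_three (of R N₁) (of R N₂) (of R N₃) inferInstance inferInstance
      inferInstance f g hf hg hfg.linearMap_ker_eq.symm).2.2 ⟨h₁, h₃⟩

end IsThickClass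

variable {A : Type u} [CommRing A] [Algebra R A]

instance finite_restrictScalars_obj [Module.Finite R A] (M : ModuleCat.{u} A)
    [Module.Finite A M] : Module.Finite R ((restrictScalars.{u} (algebraMap R A)).obj M) := by
  have : IsScalarTower R A ((restrictScalars.{u} (algebraMap R A)).obj M) :=
    ⟨fun r a m ↦ by rw [Algebra.smul_def, mul_smul]; rfl⟩
  have : Module.Finite A ((restrictScalars.{u} (algebraMap R A)).obj M) := ‹_›
  exact Module.Finite.trans A _

noncomputable abbrev restrictScalarsLinearMap {X Y : ModuleCat.{u} A} (f : X →ₗ[A] Y) :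
    (restrictScalars.{u} (algebraMap R A)).obj X →ₗ[R]
      (restrictScalars.{u} (algebraMap R A)).obj Y :=
  ((restrictScalars.{u} (algebraMap R A)).map (ofHom f)).hom

theorem IsThickClass.preimage_restrictScalars [Module.Finite R A] {S : Set (ModuleCat.{u} R)}
    (hS : IsThickClass S) : IsThickClass ((restrictScalars.{u} (algebraMap R A)).obj ⁻¹' S) where
  of_linearEquiv _ _ hM := fun ⟨e⟩ ↦
    hS.of_linearEquiv _ _ hM ⟨((restrictScalars _).mapIso e.toModuleIso).toLinearEquiv⟩
  of_retract _ _ _ _ hM := fun ⟨i, r, hri⟩ ↦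
    hS.of_retract _ _ inferInstance inferInstance hM
      ⟨restrictScalarsLinearMap i, restrictScalarsLinearMap r,
        LinearMap.ext fun x ↦ LinearMap.congr_fun hri x⟩
  two_of_three _ _ _ _ _ _ f g hf hg hfg :=
    hS.two_of_three _ _ _ inferInstance inferInstance inferInstance
      (restrictScalarsLinearMap f) (restrictScalarsLinearMap g) hf hg
      (SetLike.ext fun y ↦ SetLike.ext_iff.mp hfg y)

def restrictScalarsObjOfIsScalarTower (M : Type u) [AddCommGroup M] [Module A M] [Module R M]
    [IsScalarTower R A M] : (restrictScalars.{u} (algebraMap R A)).obj (of A M) ≃ₗ[R] M :=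
  { AddEquiv.refl M with map_smul' := fun r m ↦ algebraMap_smul (M := M) A r m }

end ModuleCat

open ModuleCat

section

variable {R A : Type u} [CommRing R] [CommRing A] [Algebra R A]

theorem IsModGenerator.mem_of_restrictScalars_mem [Module.Finite R A] {G : ModuleCat.{u} A}
    (hG : IsModGenerator A G) {S : Set (ModuleCat.{u} R)} (hS : IsThickClass S)
    (hGS : (restrictScalars.{u} (algebraMap R A)).obj G ∈ S) (M : Type u) [AddCommGroup M]
    [Module A M] [Module R M] [IsScalarTower R A M] [Module.Finite A M] : of R M ∈ S :=
  hS.of_linearEquiv _ _ ((isModGenerator_iff.mp hG).2 _ hGS hS.preimage_restrictScalars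
    (of A M) ‹_›) ⟨restrictScalarsObjOfIsScalarTower M⟩

theorem IsModGenerator.quotient_mem_of_le {p q : Ideal R} (hpq : p ≤ q)
    {G : ModuleCat.{u} (R ⧸ p)} (hG : IsModGenerator (R ⧸ p) G) {S : Set (ModuleCat.{u} R)}
    (hS : IsThickClass S) (hGS : (restrictScalars.{u} (algebraMap R (R ⧸ p))).obj G ∈ S) :
    of R (R ⧸ q) ∈ S :=
  hS.of_linearEquiv (of R ((R ⧸ p) ⧸ q.map (Ideal.Quotient.mkₐ R p))) (of R (R ⧸ q))
    (hG.mem_of_restrictScalars_mem hS hGS _)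
    ⟨(DoubleQuot.quotQuotEquivQuotOfLEₐ R hpq).toLinearEquiv⟩

end

/-- If, for every minimal prime `p` of a commutative Noetherian ring `R`, the category of
finitely generated `(R/p)`-modules has a generator, then the category of finitely generated
`R`-modules has a generator. -/
theorem mod_hasGenerator_of_minimalPrimes (R : Type u) [CommRing R] [IsNoetherianRing R]
    (h : ∀ p ∈ minimalPrimes R, ∃ G : ModuleCat.{u} (R ⧸ p), IsModGenerator (R ⧸ p) G) :
    ∃ G : ModuleCat.{u} R, IsModGenerator R G := by
  choose G hG using fun p : minimalPrimes R ↦ h p.1 p.2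
  have : Finite (minimalPrimes R) := (minimalPrimes.finite_of_isNoetherianRing R).to_subtype
  have (p : minimalPrimes R) : Module.Finite (R ⧸ p.1) (G p) := (hG p).1
  let Gres (p : minimalPrimes R) := (restrictScalars.{u} (algebraMap R (R ⧸ p.1))).obj (G p)
  refine ⟨of R (∀ p, Gres p), isModGenerator_iff.mpr ⟨inferInstance, fun S hGS hS ↦ ?_⟩⟩
  have hGres (p : minimalPrimes R) : Gres p ∈ S :=
    hS.of_retract _ _ inferInstance inferInstance hGS
      ⟨LinearMap.single R (fun p ↦ Gres p) p, LinearMap.proj p,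
        LinearMap.ext fun x ↦ by simp⟩
  have hprime (q : Ideal R) (hq : q.IsPrime) : of R (R ⧸ q) ∈ S := by
    obtain ⟨p, hp, hpq⟩ := Ideal.exists_minimalPrimes_le (bot_le : ⊥ ≤ q)
    exact (hG ⟨p, hp⟩).quotient_mem_of_le hpq hS (hGres ⟨p, hp⟩)
  exact fun M hM ↦
    hS.mem_of_isNoetherianRing (fun N _ ↦ hS.mem_of_subsingleton hGS N) hprime M hM
end

section
/- Let R be a commutative Noetherian ring. If for every module-finite commutative R-algebra that is an integral domain the category of its finitely generated modules has a generator, then for every module-finite commutative R-algebra A the category of finitely generated A-modules has a generator. -/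
/-! A finitely generated module `G` is a generator relative to an ideal `I` if every thick class
containing `G` contains every finitely generated module killed by `I`; a generator relative to `0`
is a generator. Relative generators exist for all ideals by Noetherian induction. For `I = A` the
zero module works, and for a prime `I` a generator of the domain `A ⧸ I` does. Otherwise there are
`a, b ∉ I` with `ab ∈ I`; a module `M` killed by `I` is an extension of `M ⧸ aM`, killed by
`I + (a)`, by `aM`, killed by `I + (b)`, so the product of relative generators for these two larger
ideals is a relative generator for `I`. -/

open CategoryTheory

universe u

universe v

structure IsThickModClass {A : Type*} [CommRing A] (S : Set (ModuleCat.{v} A)) : Prop where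
  mem_of_linearEquiv : ∀ M N : ModuleCat.{v} A, M ∈ S → Nonempty (M ≃ₗ[A] N) → N ∈ S
  mem_of_retract : ∀ M N : ModuleCat.{v} A, Module.Finite A M → Module.Finite A N → M ∈ S →
    (∃ (i : N →ₗ[A] M) (r : M →ₗ[A] N), r ∘ₗ i = LinearMap.id) → N ∈ S
  two_out_of_three : ∀ X Y Z : ModuleCat.{v} A,
    Module.Finite A X → Module.Finite A Y → Module.Finite A Z →
    ∀ (f : X →ₗ[A] Y) (g : Y →ₗ[A] Z), Function.Injective f → Function.Surjective g →
      LinearMap.range f = LinearMap.ker g →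
      ((X ∈ S ∧ Y ∈ S → Z ∈ S) ∧ (Y ∈ S ∧ Z ∈ S → X ∈ S) ∧ (X ∈ S ∧ Z ∈ S → Y ∈ S))

namespace IsThickModClass

variable {A : Type*} [CommRing A] {S : Set (ModuleCat.{v} A)} {M N : Type v}
  [AddCommGroup M] [Module A M] [AddCommGroup N] [Module A N]
  [Module.Finite A M] [Module.Finite A N]

theorem fst_mem (hS : IsThickModClass S) (h : ModuleCat.of A (M × N) ∈ S) :
    ModuleCat.of A M ∈ S :=
  hS.mem_of_retract _ _ inferInstance inferInstance h
    ⟨LinearMap.inl A M N, LinearMap.fst A M N, LinearMap.fst_comp_inl A M N⟩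

theorem snd_mem (hS : IsThickModClass S) (h : ModuleCat.of A (M × N) ∈ S) :
    ModuleCat.of A N ∈ S :=
  hS.mem_of_retract _ _ inferInstance inferInstance h
    ⟨LinearMap.inr A M N, LinearMap.snd A M N, LinearMap.snd_comp_inr A M N⟩

theorem mem_of_submodule_of_quotient (hS : IsThickModClass S) (P : Submodule A M)
    [Module.Finite A P] (hP : ModuleCat.of A P ∈ S) (hQ : ModuleCat.of A (M ⧸ P) ∈ S) :
    ModuleCat.of A M ∈ S :=
  (hS.two_out_of_three (.of A P) (.of A M) (.of A (M ⧸ P)) inferInstance inferInstance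
    inferInstance P.subtype P.mkQ P.injective_subtype P.mkQ_surjective
    (by rw [Submodule.range_subtype, Submodule.ker_mkQ])).2.2 ⟨hP, hQ⟩

end IsThickModClass

theorem IsModGenerator.mem_of_isThickModClass {A : Type u} [CommRing A] {G : ModuleCat.{u} A}
    (hG : IsModGenerator A G) {S : Set (ModuleCat.{u} A)} (hS : IsThickModClass S) (hGS : G ∈ S)
    (M : ModuleCat.{u} A) [Module.Finite A M] : M ∈ S :=
  hG.2 S hGS hS.1 hS.2 hS.3 M inferInstance

section RestrictScalars

variable {A B : Type*} [CommRing A] [CommRing B] {f : A →+* B}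

theorem ModuleCat.finite_restrictScalars_obj_s12 (hf : Function.Surjective f) (N : ModuleCat.{v} B)
    [Module.Finite B N] : Module.Finite A ((ModuleCat.restrictScalars f).obj N) := by
  let : Algebra A B := f.toAlgebra
  have : IsScalarTower A B ((ModuleCat.restrictScalars f).obj N) := ⟨fun _ _ _ => mul_smul _ _ _⟩
  have : Module.Finite A B := RingHom.Finite.of_surjective f hf
  have : Module.Finite B ((ModuleCat.restrictScalars f).obj N) := ‹Module.Finite B N›
  exact Module.Finite.trans B _

theorem IsThickModClass.comap_restrictScalars (hf : Function.Surjective f)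
    {S : Set (ModuleCat.{v} A)} (hS : IsThickModClass S) :
    IsThickModClass {N : ModuleCat.{v} B | (ModuleCat.restrictScalars f).obj N ∈ S} := by
  have fin := ModuleCat.finite_restrictScalars_obj_s12 hf
  let res {X Y : ModuleCat.{v} B} (g : X →ₗ[B] Y) :=
    ((ModuleCat.restrictScalars f).map (ModuleCat.ofHom g)).hom
  refine ⟨fun M N hM ⟨e⟩ => ?_, fun M N _ _ hM ⟨i, r, hri⟩ => ?_,
    fun X Y Z _ _ _ g h hg hh hgh => ?_⟩
  · exact hS.mem_of_linearEquiv _ _ hM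
      ⟨((ModuleCat.restrictScalars f).mapIso e.toModuleIso).toLinearEquiv⟩
  · exact hS.mem_of_retract _ _ (fin M) (fin N) hM
      ⟨res i, res r, LinearMap.ext fun x => LinearMap.congr_fun hri x⟩
  · have hres : LinearMap.range (res g) = LinearMap.ker (res h) :=
      SetLike.ext fun y => SetLike.ext_iff.mp hgh y
    exact hS.two_out_of_three _ _ _ (fin X) (fin Y) (fin Z) (res g) (res h) hg hh hres

end RestrictScalars

section Annihilator

variable {R M : Type*}

theorem Module.mem_annihilator_range_lsmul [CommSemiring R] [AddCommMonoid M] [Module R M]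
    {a b : R} (hab : a * b ∈ Module.annihilator R M) :
    b ∈ Module.annihilator R (LinearMap.range (LinearMap.lsmul R M a)) := by
  refine Module.mem_annihilator.mpr ?_
  rintro ⟨_, m, rfl⟩
  refine Subtype.ext ?_
  simpa [smul_smul, mul_comm] using Module.mem_annihilator.mp hab m

theorem Module.mem_annihilator_quotient_range_lsmul [CommRing R] [AddCommGroup M] [Module R M]
    (a : R) : a ∈ Module.annihilator R (M ⧸ LinearMap.range (LinearMap.lsmul R M a)) := by
  refine Module.mem_annihilator.mpr fun q => ?_
  obtain ⟨m, rfl⟩ := Submodule.mkQ_surjective _ q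
  rw [← LinearMap.map_smul, Submodule.mkQ_apply, Submodule.Quotient.mk_eq_zero]
  exact ⟨m, rfl⟩

end Annihilator

section RelativeGenerator

variable {A : Type*} [CommRing A]

def IsRelModGenerator (I : Ideal A) (G : ModuleCat.{v} A) : Prop :=
  Module.Finite A G ∧ ∀ S : Set (ModuleCat.{v} A), IsThickModClass S → G ∈ S →
    ∀ M : ModuleCat.{v} A, Module.Finite A M → I ≤ Module.annihilator A M → M ∈ S

theorem IsRelModGenerator.isModGenerator {A : Type u} [CommRing A] {G : ModuleCat.{u} A}
    (hG : IsRelModGenerator (⊥ : Ideal A) G) : IsModGenerator A G :=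
  ⟨hG.1, fun S hGS h₁ h₂ h₃ M hM => hG.2 S ⟨h₁, h₂, h₃⟩ hGS M hM bot_le⟩

theorem isRelModGenerator_top : IsRelModGenerator (⊤ : Ideal A) (.of A PUnit.{v + 1}) := by
  refine ⟨inferInstance, fun S hS hGS M _ hM => hS.mem_of_linearEquiv _ _ hGS ⟨?_⟩⟩
  have : Subsingleton M := Module.annihilator_eq_top_iff.mp (top_le_iff.mp hM)
  exact LinearEquiv.ofSubsingleton _ _

theorem IsModGenerator.isRelModGenerator_restrictScalars {A : Type u} [CommRing A] {I : Ideal A}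
    {G : ModuleCat.{u} (A ⧸ I)} (hG : IsModGenerator (A ⧸ I) G) :
    IsRelModGenerator I ((ModuleCat.restrictScalars (Ideal.Quotient.mk I)).obj G) := by
  have hf : Function.Surjective (Ideal.Quotient.mk I) := Ideal.Quotient.mk_surjective
  have := hG.1
  refine ⟨ModuleCat.finite_restrictScalars_obj_s12 hf G, fun S hS hGS M _ hM => ?_⟩
  let : Module (A ⧸ I) M :=
    ((Module.isTorsionBySet_iff_subset_annihilator (R := A) (M := M)).mpr hM).module
  have : Module.Finite (A ⧸ I) M := Module.Finite.of_restrictScalars_finite A (A ⧸ I) M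
  have hM' := hG.mem_of_isThickModClass (hS.comap_restrictScalars hf) hGS (.of (A ⧸ I) M)
  exact hS.mem_of_linearEquiv _ _ hM' ⟨(AddEquiv.refl M).toLinearEquiv fun _ _ => rfl⟩

theorem IsRelModGenerator.prod_of_mul_mem {I : Ideal A} {a b : A} (hab : a * b ∈ I)
    {G₁ G₂ : ModuleCat.{v} A} (h₁ : IsRelModGenerator (I ⊔ Ideal.span {a}) G₁)
    (h₂ : IsRelModGenerator (I ⊔ Ideal.span {b}) G₂) :
    IsRelModGenerator I (.of A (G₁ × G₂)) := by
  have := h₁.1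
  have := h₂.1
  refine ⟨inferInstance, fun S hS hGS M _ hM => ?_⟩
  let P := LinearMap.range (LinearMap.lsmul A M a)
  have hP : I ⊔ Ideal.span {b} ≤ Module.annihilator A P :=
    sup_le (hM.trans (LinearMap.annihilator_le_of_injective _ P.injective_subtype))
      (Ideal.span_singleton_le_iff_mem _ |>.mpr (Module.mem_annihilator_range_lsmul (hM hab)))
  have hQ : I ⊔ Ideal.span {a} ≤ Module.annihilator A (M ⧸ P) :=
    sup_le (hM.trans (LinearMap.annihilator_le_of_surjective _ P.mkQ_surjective))
      (Ideal.span_singleton_le_iff_mem _ |>.mpr (Module.mem_annihilator_quotient_range_lsmul a))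
  exact hS.mem_of_submodule_of_quotient P
    (h₂.2 S hS (hS.snd_mem hGS) (.of A P) inferInstance hP)
    (h₁.2 S hS (hS.fst_mem hGS) (.of A (M ⧸ P)) inferInstance hQ)

theorem exists_isRelModGenerator [IsNoetherianRing A]
    (hprime : ∀ P : Ideal A, P.IsPrime → ∃ G : ModuleCat.{v} A, IsRelModGenerator P G)
    (I : Ideal A) : ∃ G : ModuleCat.{v} A, IsRelModGenerator I G := by
  induction I using IsNoetherian.induction with
  | hgt I ih =>
  by_cases hI : Ideal.IsPrime I
  · exact hprime I hI
  obtain rfl | ⟨a, ha, b, hb, hab⟩ := Ideal.not_isPrime_iff.mp hI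
  · exact ⟨_, isRelModGenerator_top⟩
  obtain ⟨G₁, hG₁⟩ := ih _ (Submodule.lt_sup_iff_notMem.mpr ha)
  obtain ⟨G₂, hG₂⟩ := ih _ (Submodule.lt_sup_iff_notMem.mpr hb)
  exact ⟨_, hG₁.prod_of_mul_mem hab hG₂⟩

end RelativeGenerator

/-- If for every module-finite commutative algebra domain over a commutative Noetherian ring
`R` the category of its finitely generated modules has a generator, then for every
module-finite commutative `R`-algebra `A` the category of finitely generated `A`-modules has
a generator. -/
theorem moduleFinite_hasGenerator_of_domain_generator (R : Type u) [CommRing R]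
    [IsNoetherianRing R]
    (h : ∀ (A : Type u) [CommRing A] [Algebra R A] [Module.Finite R A] [IsDomain A],
      ∃ G : ModuleCat.{u} A, IsModGenerator A G) :
    ∀ (A : Type u) [CommRing A] [Algebra R A] [Module.Finite R A],
      ∃ G : ModuleCat.{u} A, IsModGenerator A G := by
  intro A _ _ _
  have : IsNoetherianRing A := Algebra.FiniteType.isNoetherianRing R A
  have hprime (P : Ideal A) (_ : P.IsPrime) : ∃ G, IsRelModGenerator P G := by
    obtain ⟨G, hG⟩ := h (A ⧸ P)
    exact ⟨_, hG.isRelModGenerator_restrictScalars⟩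
  obtain ⟨G, hG⟩ := exists_isRelModGenerator hprime ⊥
  exact ⟨G, hG.isModGenerator⟩
end
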